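/- arXiv:2101.03519 — 2 statements merged into one kernel-verified Lean document; each statement's English description precedes it below -/
import Mathlib

section
/- Let P_0 be a simple path in G and let G_3 be the graph obtained from G by deleting all edges of P_0. If the contiguous subpath (P_0)_{i,j} (0 ≤ i < j < |P_0|) is a separator path, then among the vertices (P_0)_i, …, (P_0)_j, all those with odd index belong to one connected component C_o of G_3 and all those with even index belong to a different connected component C_e of G_3. Conversely, if for 0 ≤ i < j < |P_0| all vertices of odd index among (P_0)_i, …, (P_0)_j lie in one connected component C_o of G_3 and all vertices of even index lie in a different connected component C_e of G_3, and no contiguous subpath (P_0)_{x,y} with 0 ≤ x < y < |P_0| that properly contains (P_0)_{i,j} satisfies the same condition, then (P_0)_{i,j} is a separator path. -/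
open SimpleGraph

namespace NSP

variable {V : Type*}

/-- A chordal graph: every cycle with at least four vertices has a chord,
i.e. an edge not on the cycle joining two vertices of the cycle. -/
def Chordal (G : SimpleGraph V) : Prop :=
  ∀ ⦃v : V⦄ (c : G.Walk v v), c.IsCycle → 4 ≤ c.length →
    ∃ u w : V, u ∈ c.support ∧ w ∈ c.support ∧ G.Adj u w ∧ s(u, w) ∉ c.edges

/-- A path in `G`, given as a nonempty list of vertices with consecutive
vertices adjacent. -/
def IsPathSeq (G : SimpleGraph V) (p : List V) : Prop :=
  p ≠ [] ∧ p.Chain' G.Adj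

/-- A simple path: a path all of whose vertices are distinct. -/
def IsSimpleSeq (G : SimpleGraph V) (p : List V) : Prop :=
  IsPathSeq G p ∧ p.Nodup

/-- The set of edges of a path sequence. -/
def edgesOf (p : List V) : Set (Sym2 V) :=
  {e | ∃ (i : ℕ) (h : i + 1 < p.length),
    e = s(p.get ⟨i, by omega⟩, p.get ⟨i + 1, h⟩)}

/-- A set of edges is separating if deleting it from `G` leaves a
disconnected graph. -/
def Separating (G : SimpleGraph V) (D : Set (Sym2 V)) : Prop :=
  ¬ (G.deleteEdges D).Connected

/-- A path is separating if its edge set is separating. -/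
def SeparatingPath (G : SimpleGraph V) (p : List V) : Prop :=
  Separating G (edgesOf p)

/-- The contiguous subpath `p_{i,j} = p_i → ⋯ → p_j`. -/
def subseq (p : List V) (i j : ℕ) : List V :=
  (p.take (j + 1)).drop i

/-- `q` is a contiguous subpath of `p`. -/
def ContigSub (q p : List V) : Prop :=
  ∃ i j : ℕ, i ≤ j ∧ j < p.length ∧ q = subseq p i j

/-- A separator path: a simple separating path that does not properly contain
(as a contiguous subpath) a separating path. -/
def SeparatorPath (G : SimpleGraph V) (p : List V) : Prop :=
  IsSimpleSeq G p ∧ SeparatingPath G p ∧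
    ∀ q : List V, ContigSub q p → q ≠ p → ¬ SeparatingPath G q

/-- `u` and `v` are weakly `p`-connected: some path between `u` and `v`
shares no edge with `p`. -/
def WeaklyConn (G : SimpleGraph V) (p : List V) (u v : V) : Prop :=
  ∃ q : List V, IsPathSeq G q ∧ q.head? = some u ∧ q.getLast? = some v ∧
    edgesOf q ∩ edgesOf p = ∅

/-- `u` and `v` are strongly `p`-connected: some path between `u` and `v`
shares no edge with `p` and, except at its endpoints, no vertex with `p`. -/
def StronglyConn (G : SimpleGraph V) (p : List V) (u v : V) : Prop :=
  ∃ q : List V, IsPathSeq G q ∧ q.head? = some u ∧ q.getLast? = some v ∧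
    edgesOf q ∩ edgesOf p = ∅ ∧
    ∀ (i : ℕ) (h : i < q.length), 0 < i → i + 1 < q.length → q.get ⟨i, h⟩ ∉ p

/-- A path `r` is traversable if some simple path from `S` to `T` contains
`r` as a contiguous subpath. -/
def Traversable (G : SimpleGraph V) (S T : V) (r : List V) : Prop :=
  ∃ p : List V, IsSimpleSeq G p ∧ p.head? = some S ∧ p.getLast? = some T ∧
    ContigSub r p

/-- A bad vertex: the middle vertex of a traversable separator path with
exactly two edges. -/
def BadVertex (G : SimpleGraph V) (S T : V) (v : V) : Prop :=
  ∃ r : List V, SeparatorPath G r ∧ Traversable G S T r ∧ r.length = 3 ∧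
    r[1]? = some v

/-- A separator path is useful if each two-edge segment is shorter than the
corresponding chord. -/
def Useful (w : Sym2 V → ℝ) (r : List V) : Prop :=
  ∀ (i : ℕ) (h : i + 2 < r.length),
    w s(r.get ⟨i, by omega⟩, r.get ⟨i + 1, by omega⟩) +
      w s(r.get ⟨i + 1, by omega⟩, r.get ⟨i + 2, h⟩) <
      w s(r.get ⟨i, by omega⟩, r.get ⟨i + 2, h⟩)

/-- A normal separator path: traversable, useful, and with more than two
edges (i.e. at least four vertices). -/
def NormalSep (G : SimpleGraph V) (w : Sym2 V → ℝ) (S T : V) (r : List V) : Prop :=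
  SeparatorPath G r ∧ Traversable G S T r ∧ Useful w r ∧ 3 < r.length

/-- `v` is an inner vertex of `r` (a vertex of `r` other than its endpoints). -/
def InnerMem (r : List V) (v : V) : Prop :=
  ∃ (i : ℕ) (h : i < r.length), 0 < i ∧ i + 1 < r.length ∧ r.get ⟨i, h⟩ = v

/-- The total length of a path with respect to edge lengths `w`. -/
def pathLength (w : Sym2 V → ℝ) (p : List V) : ℝ :=
  ((p.zip p.tail).map fun q => w s(q.1, q.2)).sum

/-- All edges of `G` have positive length. -/
def EdgePos (G : SimpleGraph V) (w : Sym2 V → ℝ) : Prop :=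
  ∀ e ∈ G.edgeSet, 0 < w e

/-- The subgraph of `G` formed by the edges of `D` together with their
endpoints. -/
def edgeSubgraph (G : SimpleGraph V) (D : Set (Sym2 V)) : G.Subgraph where
  verts := {v | ∃ e ∈ D ∩ G.edgeSet, v ∈ e}
  Adj u v := s(u, v) ∈ D ∧ G.Adj u v
  adj_sub h := h.2
  edge_vert {v w} h := ⟨s(v, w), ⟨h.1, h.2⟩, Sym2.mem_mk_left v w⟩
  symm := ⟨fun u v h => by
    obtain ⟨h1, h2⟩ := h
    exact ⟨by rwa [Sym2.eq_swap], h2.symm⟩⟩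

/-- For a simple path `P₀` in `G` and indices `i ≤ j < |P₀|`: in the graph
obtained by deleting the edges of `P₀` from `G`, vertices `P₀ₖ`
(`i ≤ k ≤ j`) of equal parity of index are in a common connected component,
while those of different parity are in different connected components. -/
def OddEvenSplit (G : SimpleGraph V) (P0 : List V) (i j : ℕ)
    (hj : j < P0.length) : Prop :=
  (∀ (k l : ℕ) (hik : i ≤ k) (hkj : k ≤ j) (hil : i ≤ l) (hlj : l ≤ j),
      k % 2 = l % 2 →
      (G.deleteEdges (edgesOf P0)).Reachable
        (P0.get ⟨k, by omega⟩) (P0.get ⟨l, by omega⟩)) ∧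
  (∀ (k l : ℕ) (hik : i ≤ k) (hkj : k ≤ j) (hil : i ≤ l) (hlj : l ≤ j),
      k % 2 ≠ l % 2 →
      ¬ (G.deleteEdges (edgesOf P0)).Reachable
        (P0.get ⟨k, by omega⟩) (P0.get ⟨l, by omega⟩))

end NSP

/-!
Deleting the edges of a separator path `P_{i,j}` leaves two classes of vertices, and by
minimality both end edges of the segment join the two classes. In a chordal graph the edges
between two connected vertex classes are linked through shared endpoints: a chord of a cycle
through two unlinked such edges produces a shorter cycle of the same kind. Along the path this
forces every edge of the segment to join the two classes, so the classes alternate with the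
parity of the index, and chordality provides chords `P_k P_{k+2}`; these are not edges of `P_0`,
so vertices of equal parity stay joined in `G_3`.

Conversely, the split provides the same chords. They keep `G` connected when a proper part of
the segment is deleted. A shortest walk that avoids the segment and joins the ends of one of its
edges closes up to a cycle whose chords give shorter such walks, and it cannot be a triangle:
that would contradict either the split or, through an edge of `P_0` next to the segment, its
maximality.
-/

namespace SimpleGraph

variable {V : Type*} {G : SimpleGraph V}

theorem Reachable.mem_of_adj_closed {S : Set V} (hS : ∀ u v, G.Adj u v → u ∈ S → v ∈ S)
    {u v : V} (huv : G.Reachable u v) (hu : u ∈ S) : v ∈ S := by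
  rw [reachable_iff_reflTransGen] at huv
  induction huv with
  | refl => exact hu
  | tail _ hbc ih => exact hS _ _ hbc ih

theorem Reachable.of_forall_adj {G' : SimpleGraph V}
    (h : ∀ u v, G.Adj u v → G'.Reachable u v) {u v : V} (huv : G.Reachable u v) :
    G'.Reachable u v :=
  huv.mem_of_adj_closed (S := {w | G'.Reachable u w}) (fun _ _ hab hu => hu.trans (h _ _ hab))
    Reachable.rfl

theorem Connected.reachable_or_reachable_deleteEdges_singleton (hG : G.Connected) (a b v : V) :
    (G.deleteEdges {s(a, b)}).Reachable v a ∨ (G.deleteEdges {s(a, b)}).Reachable v b := by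
  refine (hG.preconnected a v).mem_of_adj_closed
    (S := {w | (G.deleteEdges {s(a, b)}).Reachable w a ∨ (G.deleteEdges {s(a, b)}).Reachable w b})
    (fun u w huw hu => ?_) (Or.inl Reachable.rfl)
  by_cases he : s(u, w) = s(a, b)
  · rcases Sym2.eq_iff.1 he with ⟨-, rfl⟩ | ⟨-, rfl⟩
    exacts [Or.inr Reachable.rfl, Or.inl Reachable.rfl]
  · have hwu : (G.deleteEdges {s(a, b)}).Reachable w u := by
      refine (deleteEdges_adj.2 ⟨huw.symm, ?_⟩).reachable
      rw [Set.mem_singleton_iff, Sym2.eq_swap]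
      exact he
    exact hu.imp hwu.trans hwu.trans

theorem Connected.not_reachable_deleteEdges_singleton (hG : G.Connected) {a b : V}
    (h : ¬(G.deleteEdges {s(a, b)}).Connected) : ¬(G.deleteEdges {s(a, b)}).Reachable a b :=
  fun hab => h (hG.connected_delete_edge_of_not_isBridge (isBridge_iff.not_left.2 hab))

theorem Reachable.exists_walk_of_deleteEdges {D : Set (Sym2 V)} {u v : V}
    (h : (G.deleteEdges D).Reachable u v) :
    ∃ W : G.Walk u v, (∀ e ∈ W.edges, e ∉ D) ∧
      ∀ w ∈ W.support, (G.deleteEdges D).Reachable u w := by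
  classical
  obtain ⟨W⟩ := h
  refine ⟨W.mapLe (deleteEdges_le D), fun e he => ?_, fun w hw => ?_⟩
  · simp only [Walk.mapLe, Walk.edges_map, Hom.ofLE_apply, Sym2.map_id', List.mem_map, id] at he
    obtain ⟨e, he', rfl⟩ := he
    have := W.edges_subset_edgeSet he'
    rw [edgeSet_deleteEdges] at this
    exact this.2
  · simp only [Walk.mapLe, Walk.support_map, List.mem_map, Hom.ofLE_apply] at hw
    obtain ⟨w, hw, rfl⟩ := hw
    exact (W.takeUntil w hw).reachable

namespace Walk

theorem exists_eq_append_append {u v x y : V} (W : G.Walk u v) (hx : x ∈ W.support)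
    (hy : y ∈ W.support) :
    ∃ (a b : V) (A : G.Walk u a) (Z : G.Walk a b) (B : G.Walk b v),
      s(a, b) = s(x, y) ∧ W = A.append (Z.append B) := by
  classical
  have hy' : y ∈ (W.takeUntil x hx).support ∨ y ∈ (W.dropUntil x hx).support := by
    rw [← mem_support_append_iff, take_spec]; exact hy
  rcases hy' with hy' | hy'
  · refine ⟨y, x, (W.takeUntil x hx).takeUntil y hy', (W.takeUntil x hx).dropUntil y hy',
      W.dropUntil x hx, Sym2.eq_swap, ?_⟩
    rw [append_assoc, take_spec, take_spec]
  · refine ⟨x, y, W.takeUntil x hx, (W.dropUntil x hx).takeUntil y hy',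
      (W.dropUntil x hx).dropUntil y hy', rfl, ?_⟩
    rw [take_spec, take_spec]

theorem exists_shorter_of_chord {u v x y : V} (W : G.Walk u v) (hx : x ∈ W.support)
    (hy : y ∈ W.support) (hxy : G.Adj x y) (hW : s(x, y) ∉ W.edges) :
    ∃ W' : G.Walk u v, W'.length < W.length ∧ (∀ w ∈ W'.support, w ∈ W.support) ∧
      ∀ e ∈ W'.edges, e ∈ W.edges ∨ e = s(x, y) := by
  obtain ⟨a, b, A, Z, B, hab, rfl⟩ := W.exists_eq_append_append hx hy
  have hadj : G.Adj a b := by rw [← G.mem_edgeSet, hab, G.mem_edgeSet]; exact hxy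
  have hZ : 2 ≤ Z.length := by
    refine Nat.le_of_not_lt fun h => ?_
    interval_cases hZ : Z.length
    · exact hadj.ne (eq_of_length_eq_zero hZ)
    · cases Z with
      | nil => simp at hZ
      | cons h' Z' =>
        obtain rfl := eq_of_length_eq_zero (by simpa using hZ : Z'.length = 0)
        exact hW (by simp [← hab])
  refine ⟨A.append (cons hadj B), ?_, fun w hw => ?_, fun e he => ?_⟩
  · simp only [length_append, length_cons]; omega
  · simp only [mem_support_append_iff, support_cons, List.mem_cons] at hw ⊢
    rcases hw with hw | rfl | hw
    exacts [Or.inl hw, Or.inr (Or.inl Z.start_mem_support), Or.inr (Or.inr hw)]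
  · simp only [edges_append, edges_cons, List.mem_append, List.mem_cons] at he ⊢
    rcases he with he | rfl | he
    exacts [Or.inl (Or.inl he), Or.inr hab, Or.inl (Or.inr (Or.inr he))]

theorem exists_subwalk {u v x y : V} (W : G.Walk u v) (hx : x ∈ W.support)
    (hy : y ∈ W.support) :
    ∃ Z : G.Walk x y, (∀ e ∈ Z.edges, e ∈ W.edges) ∧
      (Z.length < W.length ∨ s(x, y) = s(u, v)) := by
  obtain ⟨a, b, A, Z, B, hab, rfl⟩ := W.exists_eq_append_append hx hy
  have hlen : Z.length < (A.append (Z.append B)).length ∨ s(a, b) = s(u, v) := by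
    rcases Nat.eq_zero_or_pos (A.length + B.length) with h | h
    · obtain rfl := eq_of_length_eq_zero (show A.length = 0 by omega)
      obtain rfl := eq_of_length_eq_zero (show B.length = 0 by omega)
      exact Or.inr rfl
    · left; simp only [length_append]; omega
  have hsub : ∀ e ∈ Z.edges, e ∈ (A.append (Z.append B)).edges := by
    intro e he; simp [he]
  rcases Sym2.eq_iff.1 hab with ⟨rfl, rfl⟩ | ⟨rfl, rfl⟩
  · exact ⟨Z, hsub, hlen⟩
  · refine ⟨Z.reverse, fun e he => hsub e (by simpa using he), ?_⟩
    rwa [length_reverse, Sym2.eq_swap]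

theorem exists_of_length_eq_two {a b : V} (W : G.Walk a b) (h : W.length = 2) :
    ∃ x, G.Adj a x ∧ G.Adj x b ∧ s(a, x) ∈ W.edges ∧ s(x, b) ∈ W.edges := by
  match W, h with
  | cons h₁ (cons h₂ nil), _ => exact ⟨_, h₁, h₂, by simp, by simp⟩

theorem mem_edges_of_length_eq_one {a b : V} (W : G.Walk a b) (h : W.length = 1) :
    s(a, b) ∈ W.edges := by
  match W, h with
  | cons _ nil, _ => simp

end Walk

end SimpleGraph

namespace NSP

variable {V : Type*} {G : SimpleGraph V}

/-! ### Chordal graphs -/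

theorem Chordal.exists_chord (hG : Chordal G) {a b : V} (W : G.Walk a b) (hW : W.IsPath)
    (hba : G.Adj b a) (hlen : 3 ≤ W.length) :
    ∃ u w, u ∈ W.support ∧ w ∈ W.support ∧ G.Adj u w ∧ s(u, w) ∉ W.edges ∧
      s(u, w) ≠ s(a, b) := by
  have hclose : s(b, a) ∉ W.edges := fun h => by
    have := hW.length_eq_one_of_mem_edges (Sym2.eq_swap ▸ h); omega
  obtain ⟨u, w, hu, hw, huw, hnot⟩ :=
    hG (Walk.cons hba W) ((Walk.cons_isCycle_iff W hba).2 ⟨hW, hclose⟩) (by simp; omega)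
  simp only [Walk.support_cons, List.mem_cons, Walk.edges_cons, not_or] at hu hw hnot
  exact ⟨u, w, hu.elim (· ▸ W.end_mem_support) id, hw.elim (· ▸ W.end_mem_support) id, huw,
    hnot.2, fun h => hnot.1 (h.trans Sym2.eq_swap)⟩

/-- A shortest walk from `x` to `z` inside `S` closes up through `y` to a cycle, and a chord of
that cycle could only shorten the walk. -/
theorem Chordal.adj_of_walk (hG : Chordal G) {S : Set V} {x y z : V} (hxy : G.Adj x y)
    (hyz : G.Adj y z) (hxz : x ≠ z) (hy : y ∉ S) (hN : ∀ w ∈ S, G.Adj y w → w = x ∨ w = z)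
    (W : G.Walk x z) (hW : ∀ w ∈ W.support, w ∈ S) : G.Adj x z := by
  classical
  suffices key : ∀ n (W : G.Walk x z), W.IsPath → (∀ w ∈ W.support, w ∈ S) → W.length = n →
      G.Adj x z from
    key _ W.bypass W.bypass_isPath (fun w hw => hW w (W.support_bypass_subset_support hw)) rfl
  intro n
  induction n using Nat.strong_induction_on with
  | _ n ih =>
  rintro W hWp hWS rfl
  rcases Nat.lt_or_ge W.length 2 with hlt | hge
  · interval_cases h : W.length
    · exact absurd (Walk.eq_of_length_eq_zero h) hxz
    · exact W.adj_of_length_eq_one h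
  have hyW : y ∉ W.support := fun h => hy (hWS y h)
  set C := W.concat hyz.symm
  have hyC : ∀ w ∈ W.support, G.Adj y w → s(y, w) ∈ C.edges ∨ s(y, w) = s(x, y) := by
    intro w hw hyw
    rcases hN w (hWS w hw) hyw with rfl | rfl
    · exact Or.inr Sym2.eq_swap
    · left; simp [C, Walk.edges_concat, Sym2.eq_swap]
  obtain ⟨u, w, hu, hw, huw, hnot, hne⟩ :=
    hG.exists_chord C (hWp.concat hyW hyz.symm) hxy.symm (by simp [C]; omega)
  simp only [C, Walk.support_concat, List.mem_append, List.mem_singleton] at hu hw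
  rcases hu with hu | rfl
  · rcases hw with hw | rfl
    · obtain ⟨W', hlt, hsupp, -⟩ := W.exists_shorter_of_chord hu hw huw
        (fun h => hnot (by simp [C, Walk.edges_concat, h]))
      exact ih _ (lt_of_le_of_lt W'.length_bypass_le_length hlt) W'.bypass W'.bypass_isPath
        (fun v hv => hWS v (hsupp v (W'.support_bypass_subset_support hv))) rfl
    · rw [Sym2.eq_swap] at hnot hne
      exact (hyC u hu huw.symm).elim (absurd · hnot) (absurd · hne)
  · rcases hw with hw | rfl
    · exact (hyC w hw huw).elim (absurd · hnot) (absurd · hne)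
    · exact absurd rfl huw.ne

theorem Chordal.exists_chord_of_cut (hG : Chordal G) {X Y : Set V} (hXY : Disjoint X Y)
    {x y x' y' : V} (W₁ : G.Walk x x') (W₂ : G.Walk y' y) (hW₁ : W₁.IsPath) (hW₂ : W₂.IsPath)
    (hX : ∀ w ∈ W₁.support, w ∈ X) (hY : ∀ w ∈ W₂.support, w ∈ Y)
    (hxy : G.Adj x y) (hxy' : G.Adj x' y') (hx : x ≠ x') (hy : y ≠ y') :
    ∃ u w, G.Adj u w ∧ ((u ∈ W₁.support ∧ w ∈ W₁.support ∧ s(u, w) ∉ W₁.edges) ∨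
      (u ∈ W₂.support ∧ w ∈ W₂.support ∧ s(u, w) ∉ W₂.edges) ∨
      (u ∈ W₁.support ∧ w ∈ W₂.support ∧ s(u, w) ≠ s(x, y) ∧ s(u, w) ≠ s(x', y'))) := by
  set C := W₁.append (Walk.cons hxy' W₂)
  have hC : C.IsPath := by
    rw [Walk.isPath_def, Walk.support_append, Walk.support_cons, List.tail_cons,
      List.nodup_append]
    exact ⟨hW₁.support_nodup, hW₂.support_nodup,
      fun a ha b hb => hXY.ne_of_mem (hX a ha) (hY b hb)⟩
  have h₁ : 1 ≤ W₁.length :=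
    Nat.one_le_iff_ne_zero.2 fun h => hx (Walk.eq_of_length_eq_zero h)
  have h₂ : 1 ≤ W₂.length :=
    Nat.one_le_iff_ne_zero.2 fun h => hy (Walk.eq_of_length_eq_zero h).symm
  obtain ⟨u, w, hu, hw, huw, hnot, hne⟩ :=
    hG.exists_chord C hC hxy.symm (by simp only [C, Walk.length_append, Walk.length_cons]; omega)
  have hCe : s(u, w) ∉ W₁.edges ∧ s(u, w) ≠ s(x', y') ∧ s(u, w) ∉ W₂.edges := by
    simpa [C, Walk.edges_append, not_or] using hnot
  simp only [C, Walk.mem_support_append_iff, Walk.support_cons, List.mem_cons] at hu hw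
  have hsupp : ∀ v, v ∈ W₁.support ∨ v = x' ∨ v ∈ W₂.support →
      v ∈ W₁.support ∨ v ∈ W₂.support := by
    rintro v (hv | rfl | hv)
    exacts [Or.inl hv, Or.inl W₁.end_mem_support, Or.inr hv]
  rcases hsupp u hu with hu | hu <;> rcases hsupp w hw with hw | hw
  · exact ⟨u, w, huw, Or.inl ⟨hu, hw, hCe.1⟩⟩
  · exact ⟨u, w, huw, Or.inr (Or.inr ⟨hu, hw, hne, hCe.2.1⟩)⟩
  · rw [Sym2.eq_swap] at hCe hne
    exact ⟨w, u, huw.symm, Or.inr (Or.inr ⟨hw, hu, hne, hCe.2.1⟩)⟩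
  · exact ⟨u, w, huw, Or.inr (Or.inl ⟨hu, hw, hCe.2.2⟩)⟩

def CutCounterexample (G : SimpleGraph V) (X Y : Set V) (R : V → V → Prop) (m : ℕ) : Prop :=
  ∃ (x y x' y' : V) (W₁ : G.Walk x x') (W₂ : G.Walk y' y), W₁.IsPath ∧ W₂.IsPath ∧
    (∀ w ∈ W₁.support, w ∈ X) ∧ (∀ w ∈ W₂.support, w ∈ Y) ∧ G.Adj x y ∧ G.Adj x' y' ∧
    R x y ∧ ¬R x' y' ∧ W₁.length + W₂.length = m

/-- A chord of the cycle spanned by a counterexample either shortcuts one of its paths, or joins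
them and then replaces one of the two cut edges. -/
theorem Chordal.exists_lt_of_cutCounterexample (hG : Chordal G) {X Y : Set V}
    (hXY : Disjoint X Y) {R : V → V → Prop}
    (hR : ∀ x y x' y', R x y → x' ∈ X → y' ∈ Y → G.Adj x' y' → x = x' ∨ y = y' → R x' y')
    {m : ℕ} (h : CutCounterexample G X Y R m) : ∃ m' < m, CutCounterexample G X Y R m' := by
  classical
  obtain ⟨x, y, x', y', W₁, W₂, hW₁, hW₂, hX₁, hY₂, hxy, hxy', hRxy, hR', rfl⟩ := h
  by_cases hshare : x = x' ∨ y = y'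
  · exact absurd (hR x y x' y' hRxy (hX₁ _ W₁.end_mem_support) (hY₂ _ W₂.start_mem_support)
      hxy' hshare) hR'
  rw [not_or] at hshare
  obtain ⟨u, w, huw, h⟩ :=
    hG.exists_chord_of_cut hXY W₁ W₂ hW₁ hW₂ hX₁ hY₂ hxy hxy' hshare.1 hshare.2
  rcases h with ⟨hu, hw, hnot⟩ | ⟨hu, hw, hnot⟩ | ⟨hu, hw, hne, hne'⟩
  · obtain ⟨W, hlt, hsupp, -⟩ := W₁.exists_shorter_of_chord hu hw huw hnot
    exact ⟨_, by have := W.length_bypass_le_length; omega, _, _, _, _, W.bypass, W₂,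
      W.bypass_isPath, hW₂, fun a ha => hX₁ a (hsupp a (W.support_bypass_subset_support ha)),
      hY₂, hxy, hxy', hRxy, hR', rfl⟩
  · obtain ⟨W, hlt, hsupp, -⟩ := W₂.exists_shorter_of_chord hu hw huw hnot
    exact ⟨_, by have := W.length_bypass_le_length; omega, _, _, _, _, W₁, W.bypass,
      hW₁, W.bypass_isPath, hX₁,
      fun a ha => hY₂ a (hsupp a (W.support_bypass_subset_support ha)),
      hxy, hxy', hRxy, hR', rfl⟩
  obtain ⟨A₁, B₁, rfl⟩ := Walk.mem_support_iff_exists_append.1 hu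
  obtain ⟨A₂, B₂, rfl⟩ := Walk.mem_support_iff_exists_append.1 hw
  have hX₁' : ∀ a, a ∈ A₁.support ∨ a ∈ B₁.support → a ∈ X :=
    fun a ha => hX₁ a ((Walk.mem_support_append_iff _ _).2 ha)
  have hY₂' : ∀ a, a ∈ A₂.support ∨ a ∈ B₂.support → a ∈ Y :=
    fun a ha => hY₂ a ((Walk.mem_support_append_iff _ _).2 ha)
  simp only [Walk.length_append]
  by_cases hRuw : R u w
  · have hpos : 0 < A₁.length + B₂.length := by
      by_contra h0
      obtain rfl := Walk.eq_of_length_eq_zero (show A₁.length = 0 by omega)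
      obtain rfl := Walk.eq_of_length_eq_zero (show B₂.length = 0 by omega)
      exact hne rfl
    exact ⟨_, by omega, u, w, x', y', B₁, A₂, hW₁.of_append_right, hW₂.of_append_left,
      fun a ha => hX₁' a (Or.inr ha), fun a ha => hY₂' a (Or.inl ha), huw, hxy', hRuw, hR', rfl⟩
  · have hpos : 0 < B₁.length + A₂.length := by
      by_contra h0
      obtain rfl := Walk.eq_of_length_eq_zero (show B₁.length = 0 by omega)
      obtain rfl := Walk.eq_of_length_eq_zero (show A₂.length = 0 by omega)
      exact hne' rfl
    exact ⟨_, by omega, x, y, u, w, A₁, B₂, hW₁.of_append_left, hW₂.of_append_right,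
      fun a ha => hX₁' a (Or.inl ha), fun a ha => hY₂' a (Or.inr ha), hxy, huw, hRxy, hRuw, rfl⟩

/-- The edges between two disjoint, internally connected vertex sets of a chordal graph are
linked through shared endpoints. -/
theorem Chordal.cut_closed (hG : Chordal G) {X Y : Set V} (hXY : Disjoint X Y)
    (hX : ∀ u ∈ X, ∀ v ∈ X, ∃ W : G.Walk u v, ∀ w ∈ W.support, w ∈ X)
    (hY : ∀ u ∈ Y, ∀ v ∈ Y, ∃ W : G.Walk u v, ∀ w ∈ W.support, w ∈ Y) {R : V → V → Prop}
    (hR : ∀ x y x' y', R x y → x' ∈ X → y' ∈ Y → G.Adj x' y' → x = x' ∨ y = y' → R x' y')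
    {x y x' y' : V} (hx : x ∈ X) (hy : y ∈ Y) (hxy : G.Adj x y) (hRxy : R x y)
    (hx' : x' ∈ X) (hy' : y' ∈ Y) (hxy' : G.Adj x' y') : R x' y' := by
  classical
  by_contra hR'
  have hnone : ∀ m, ¬CutCounterexample G X Y R m := by
    intro m
    induction m using Nat.strong_induction_on with
    | _ m ih =>
      intro h
      obtain ⟨m', hlt, h'⟩ := hG.exists_lt_of_cutCounterexample hXY hR h
      exact ih m' hlt h'
  obtain ⟨W₁, hW₁⟩ := hX x hx x' hx'
  obtain ⟨W₂, hW₂⟩ := hY y' hy' y hy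
  exact hnone _ ⟨x, y, x', y', W₁.bypass, W₂.bypass, W₁.bypass_isPath, W₂.bypass_isPath,
    fun w hw => hW₁ w (W₁.support_bypass_subset_support hw),
    fun w hw => hW₂ w (W₂.support_bypass_subset_support hw), hxy, hxy', hRxy, hR', rfl⟩

theorem Chordal.cut_closed_deleteEdges (hG : Chordal G) {D : Set (Sym2 V)} {a b : V}
    (hab : ¬(G.deleteEdges D).Reachable a b) {R : V → V → Prop}
    (hR : ∀ x y x' y', R x y → (G.deleteEdges D).Reachable a x' →
      (G.deleteEdges D).Reachable b y' → G.Adj x' y' → x = x' ∨ y = y' → R x' y')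
    (hadj : G.Adj a b) (hRab : R a b) {x' y' : V} (hx' : (G.deleteEdges D).Reachable a x')
    (hy' : (G.deleteEdges D).Reachable b y') (hxy' : G.Adj x' y') : R x' y' := by
  have hclass : ∀ c, ∀ u ∈ {v | (G.deleteEdges D).Reachable c v},
      ∀ v ∈ {v | (G.deleteEdges D).Reachable c v},
      ∃ W : G.Walk u v, ∀ w ∈ W.support, w ∈ {v | (G.deleteEdges D).Reachable c v} := by
    intro c u hu v hv
    obtain ⟨W, -, hW⟩ := (hu.symm.trans hv).exists_walk_of_deleteEdges
    exact ⟨W, fun w hw => hu.trans (hW w hw)⟩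
  exact hG.cut_closed (Set.disjoint_left.2 fun v hv hv' => hab (hv.trans hv'.symm)) (hclass a)
    (hclass b) hR Reachable.rfl Reachable.rfl hadj hRab hx' hy' hxy'

/-! ### Paths indexed by natural numbers -/

def segEdges (p : ℕ → V) (a b : ℕ) : Set (Sym2 V) :=
  (fun s => s(p s, p (s + 1))) '' Set.Ico a b

structure IsPathOn (G : SimpleGraph V) (p : ℕ → V) (n : ℕ) : Prop where
  adj : ∀ k, k + 1 < n → G.Adj (p k) (p (k + 1))
  injOn : Set.InjOn p (Set.Iio n)

def ParitySplit (H : SimpleGraph V) (p : ℕ → V) (i j : ℕ) : Prop :=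
  ∀ k l, i ≤ k → k ≤ j → i ≤ l → l ≤ j → (H.Reachable (p k) (p l) ↔ k % 2 = l % 2)

variable {p : ℕ → V} {n a b i j : ℕ}

theorem mem_segEdges {e : Sym2 V} :
    e ∈ segEdges p a b ↔ ∃ s, a ≤ s ∧ s < b ∧ s(p s, p (s + 1)) = e := by
  simp [segEdges, and_assoc]

theorem segEdges_mono {a' b' : ℕ} (ha : a' ≤ a) (hb : b ≤ b') :
    segEdges p a b ⊆ segEdges p a' b' :=
  Set.image_mono (Set.Ico_subset_Ico ha hb)

theorem segEdges_eq_union_left (h : a < b) :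
    segEdges p a b = segEdges p (a + 1) b ∪ {s(p a, p (a + 1))} := by
  ext e
  simp only [mem_segEdges, Set.mem_union, Set.mem_singleton_iff]
  constructor
  · rintro ⟨s, h₁, h₂, rfl⟩
    rcases h₁.eq_or_lt with rfl | h₁
    exacts [Or.inr rfl, Or.inl ⟨s, h₁, h₂, rfl⟩]
  · rintro (⟨s, h₁, h₂, rfl⟩ | rfl)
    exacts [⟨s, by omega, h₂, rfl⟩, ⟨a, le_rfl, h, rfl⟩]

theorem segEdges_eq_union_right (h : a < b) :
    segEdges p a b = segEdges p a (b - 1) ∪ {s(p (b - 1), p b)} := by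
  obtain ⟨c, rfl⟩ : ∃ c, b = c + 1 := ⟨b - 1, by omega⟩
  ext e
  simp only [mem_segEdges, Set.mem_union, Set.mem_singleton_iff, Nat.add_sub_cancel]
  constructor
  · rintro ⟨s, h₁, h₂, rfl⟩
    rcases (Nat.lt_succ_iff.1 h₂).eq_or_lt with rfl | h₂
    exacts [Or.inr rfl, Or.inl ⟨s, h₁, h₂, rfl⟩]
  · rintro (⟨s, h₁, h₂, rfl⟩ | rfl)
    exacts [⟨s, h₁, by omega, rfl⟩, ⟨c, by omega, by omega, rfl⟩]

theorem IsPathOn.adj_pred (hp : IsPathOn G p n) (hj : 0 < j) (hjn : j < n) :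
    G.Adj (p (j - 1)) (p j) := by
  simpa [Nat.sub_add_cancel hj] using hp.adj (j - 1) (by omega)

theorem IsPathOn.mem_segEdges_iff (hp : IsPathOn G p n) (hb : b < n) {m : ℕ} (hm : m < n)
    {w : V} :
    s(p m, w) ∈ segEdges p a b ↔
      (a ≤ m ∧ m < b ∧ w = p (m + 1)) ∨ (a < m ∧ m ≤ b ∧ w = p (m - 1)) := by
  rw [mem_segEdges]
  constructor
  · rintro ⟨s, h₁, h₂, he⟩
    rcases Sym2.eq_iff.1 he with ⟨h₃, rfl⟩ | ⟨rfl, h₃⟩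
    · obtain rfl : s = m := hp.injOn (show s < n by omega) hm h₃
      exact Or.inl ⟨h₁, h₂, rfl⟩
    · obtain rfl : s + 1 = m := hp.injOn (show s + 1 < n by omega) hm h₃
      exact Or.inr ⟨by omega, by omega, rfl⟩
  · rintro (⟨h₁, h₂, rfl⟩ | ⟨h₁, h₂, rfl⟩)
    · exact ⟨m, h₁, h₂, rfl⟩
    · exact ⟨m - 1, by omega, by omega, by rw [Nat.sub_add_cancel (by omega), Sym2.eq_swap]⟩

theorem IsPathOn.succ_mem_segEdges_iff (hp : IsPathOn G p n) (hb : b < n) {m : ℕ}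
    (hm : m + 1 < n) : s(p m, p (m + 1)) ∈ segEdges p a b ↔ a ≤ m ∧ m < b := by
  rw [hp.mem_segEdges_iff hb (by omega)]
  constructor
  · rintro (⟨h₁, h₂, -⟩ | ⟨-, -, h⟩)
    · exact ⟨h₁, h₂⟩
    · have := hp.injOn hm (show m - 1 < n by omega) h; omega
  · rintro ⟨h₁, h₂⟩
    exact Or.inl ⟨h₁, h₂, rfl⟩

theorem IsPathOn.add_two_not_mem_segEdges (hp : IsPathOn G p n) (hb : b < n) {k : ℕ}
    (hk : k + 2 < n) : s(p k, p (k + 2)) ∉ segEdges p a b := by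
  rw [hp.mem_segEdges_iff hb (by omega)]
  rintro (⟨-, -, h⟩ | ⟨-, -, h⟩)
  · have := hp.injOn hk (show k + 1 < n by omega) h; omega
  · have := hp.injOn hk (show k - 1 < n by omega) h; omega

theorem IsPathOn.adj_add_two (hp : IsPathOn G p n) (hG : Chordal G) (hb : b < n) {k : ℕ}
    (hk : k + 2 < n) (h₂ : (G.deleteEdges (segEdges p a b)).Reachable (p k) (p (k + 2)))
    (h₁ : ¬(G.deleteEdges (segEdges p a b)).Reachable (p k) (p (k + 1))) :
    G.Adj (p k) (p (k + 2)) := by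
  obtain ⟨W, -, hW⟩ := h₂.exists_walk_of_deleteEdges
  refine hG.adj_of_walk (S := {w | (G.deleteEdges (segEdges p a b)).Reachable (p k) w})
    (hp.adj k (by omega)) (hp.adj (k + 1) (by omega))
    (fun h => by have := hp.injOn (show k < n by omega) hk h; omega) h₁ (fun w hw hyw => ?_)
    W hW
  by_cases he : s(p (k + 1), w) ∈ segEdges p a b
  · rcases (hp.mem_segEdges_iff hb (by omega)).1 he with ⟨-, -, rfl⟩ | ⟨-, -, rfl⟩
    exacts [Or.inr rfl, Or.inl rfl]
  · exact absurd (hw.trans (deleteEdges_adj.2 ⟨hyw, he⟩).reachable.symm) h₁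

theorem IsPathOn.adj_add_two_of_paritySplit (hp : IsPathOn G p n) (hG : Chordal G)
    (hb : b < n) (hj : j < n) (hsplit : ParitySplit (G.deleteEdges (segEdges p a b)) p i j) :
    ∀ k, i ≤ k → k + 2 ≤ j → G.Adj (p k) (p (k + 2)) := fun k hik hkj =>
  hp.adj_add_two hG hb (by omega) ((hsplit k (k + 2) hik (by omega) (by omega) hkj).2 (by omega))
    fun h => absurd ((hsplit k (k + 1) hik (by omega) (by omega) (by omega)).1 h) (by omega)

theorem reachable_of_adj_add_two {K : SimpleGraph V}
    (h : ∀ k, i ≤ k → k + 2 ≤ j → K.Adj (p k) (p (k + 2))) {k l : ℕ} (hik : i ≤ k)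
    (hkj : k ≤ j) (hil : i ≤ l) (hlj : l ≤ j) (hkl : k % 2 = l % 2) :
    K.Reachable (p k) (p l) := by
  wlog hle : k ≤ l generalizing k l
  · exact (this hil hlj hik hkj hkl.symm (by omega)).symm
  obtain ⟨m, rfl⟩ : ∃ m, l = k + 2 * m := ⟨(l - k) / 2, by omega⟩
  induction m with
  | zero => rfl
  | succ m ih =>
    exact (ih (by omega) (by omega) (by omega) (by omega)).trans
      (h (k + 2 * m) (by omega) (by omega)).reachable

theorem paritySplit_of_not_reachable_succ {H : SimpleGraph V}
    (htwo : ∀ u v w, ¬H.Reachable u v → ¬H.Reachable v w → H.Reachable u w)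
    (halt : ∀ t, i ≤ t → t < j → ¬H.Reachable (p t) (p (t + 1))) : ParitySplit H p i j := by
  have hi : ∀ k, i ≤ k → k ≤ j → (H.Reachable (p i) (p k) ↔ k % 2 = i % 2) := by
    intro k hik
    induction k, hik using Nat.le_induction with
    | base => simp
    | succ k hik ih =>
      intro hk
      rw [show (k + 1) % 2 = i % 2 ↔ ¬k % 2 = i % 2 by omega, ← ih (by omega)]
      exact ⟨fun h h' => halt k hik (by omega) (h'.symm.trans h),
        fun h => htwo _ _ _ h (halt k hik (by omega))⟩
  intro k l hik hkj hil hlj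
  have hkl : H.Reachable (p k) (p l) ↔ (H.Reachable (p i) (p k) ↔ H.Reachable (p i) (p l)) :=
    ⟨fun h => ⟨(·.trans h), (·.trans h.symm)⟩, fun h => by
      by_cases hk : H.Reachable (p i) (p k)
      · exact hk.symm.trans (h.1 hk)
      · exact htwo _ _ _ (fun h' => hk h'.symm) (mt h.2 hk)⟩
  rw [hkl, hi k hik hkj, hi l hil hlj]
  omega

theorem ParitySplit.of_reachable {H : SimpleGraph V} {x y : ℕ} (h : ParitySplit H p i j)
    (hf : ∀ k, x ≤ k → k ≤ y → ∃ k', i ≤ k' ∧ k' ≤ j ∧ k' % 2 = k % 2 ∧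
      H.Reachable (p k) (p k')) :
    ParitySplit H p x y := by
  intro k l hxk hky hxl hly
  obtain ⟨k', h₁, h₂, hk, hkk⟩ := hf k hxk hky
  obtain ⟨l', h₁', h₂', hl, hll⟩ := hf l hxl hly
  rw [← hk, ← hl, ← h k' l' h₁ h₂ h₁' h₂']
  exact ⟨fun h => hkk.symm.trans (h.trans hll), fun h => hkk.trans (h.trans hll.symm)⟩

theorem ParitySplit.extend_left {H : SimpleGraph V} (h : ParitySplit H p i j) (hij : i < j)
    (hi : 0 < i) (hr : H.Reachable (p (i - 1)) (p (i + 1))) : ParitySplit H p (i - 1) j :=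
  h.of_reachable fun k hk hkj => by
    rcases hk.eq_or_lt with rfl | hk
    · exact ⟨i + 1, by omega, by omega, by omega, hr⟩
    · exact ⟨k, by omega, hkj, rfl, Reachable.rfl⟩

theorem ParitySplit.extend_right {H : SimpleGraph V} (h : ParitySplit H p i j) (hij : i < j)
    (hr : H.Reachable (p (j + 1)) (p (j - 1))) : ParitySplit H p i (j + 1) :=
  h.of_reachable fun k hik hk => by
    rcases hk.eq_or_lt with rfl | hk
    · exact ⟨j - 1, by omega, by omega, by omega, hr⟩
    · exact ⟨k, hik, by omega, rfl, Reachable.rfl⟩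

/-! ### A separator path splits the parities -/

theorem IsPathOn.mem_image_Iic_of_mem_segEdges (hp : IsPathOn G p n) (hj : j < n) {t m : ℕ}
    (htj : t < j) (ht : (G.deleteEdges (segEdges p i j)).Reachable (p t) (p (t + 1)))
    (hm : m ≤ t) {w : V} (hw : s(p m, w) ∈ segEdges p i j)
    (hmw : ¬(G.deleteEdges (segEdges p i j)).Reachable (p m) w) : w ∈ p '' Set.Iic t := by
  rcases (hp.mem_segEdges_iff hj (by omega)).1 hw with ⟨-, -, rfl⟩ | ⟨-, -, rfl⟩
  · rcases hm.lt_or_eq with hm | rfl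
    exacts [⟨m + 1, Set.mem_Iic.2 (by omega), rfl⟩, absurd ht hmw]
  · exact ⟨m - 1, Set.mem_Iic.2 (by omega), rfl⟩

/-- A non-crossing edge `p t — p (t + 1)` would separate the crossing edges inside
`p 0, …, p t` from the last one, against `Chordal.cut_closed`. -/
theorem IsPathOn.not_reachable_succ (hp : IsPathOn G p n) (hG : Chordal G) (hj : j < n)
    (htwo : ∀ v, (G.deleteEdges (segEdges p i j)).Reachable v (p i) ∨
      (G.deleteEdges (segEdges p i j)).Reachable v (p (i + 1)))
    (hi : ¬(G.deleteEdges (segEdges p i j)).Reachable (p i) (p (i + 1)))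
    (hj' : ¬(G.deleteEdges (segEdges p i j)).Reachable (p (j - 1)) (p j))
    {t : ℕ} (hit : i ≤ t) (htj : t < j) :
    ¬(G.deleteEdges (segEdges p i j)).Reachable (p t) (p (t + 1)) := by
  set H := G.deleteEdges (segEdges p i j)
  intro ht
  have hti : i < t := lt_of_le_of_ne hit (by rintro rfl; exact hi ht)
  have hcross : ∀ x y, H.Reachable (p i) x → H.Reachable (p (i + 1)) y → ¬H.Reachable x y :=
    fun x y hx hy h => hi (hx.trans (h.trans hy.symm))
  have hcut : ∀ x y, H.Reachable (p i) x → H.Reachable (p (i + 1)) y → G.Adj x y →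
      s(x, y) ∈ segEdges p i j := fun x y hx hy hxy => by
    by_contra h
    exact hcross x y hx hy (deleteEdges_adj.2 ⟨hxy, h⟩).reachable
  set P := p '' Set.Iic t
  have key : ∀ x' y', H.Reachable (p i) x' → H.Reachable (p (i + 1)) y' → G.Adj x' y' →
      x' ∈ P ∧ y' ∈ P := by
    refine fun x' y' => hG.cut_closed_deleteEdges (R := fun x y => x ∈ P ∧ y ∈ P) hi ?_
      (hp.adj i (by omega))
      ⟨⟨i, Set.mem_Iic.2 (by omega), rfl⟩, ⟨i + 1, Set.mem_Iic.2 (by omega), rfl⟩⟩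
    rintro x y x' y' ⟨hxP, hyP⟩ hx' hy' hxy' (rfl | rfl)
    · obtain ⟨m, hm, rfl⟩ := hxP
      exact ⟨⟨m, hm, rfl⟩, hp.mem_image_Iic_of_mem_segEdges hj htj ht hm
        (hcut _ _ hx' hy' hxy') (hcross _ _ hx' hy')⟩
    · obtain ⟨m, hm, rfl⟩ := hyP
      refine ⟨hp.mem_image_Iic_of_mem_segEdges hj htj ht hm ?_
        fun h => hcross _ _ hx' hy' h.symm, ⟨m, hm, rfl⟩⟩
      rw [Sym2.eq_swap]; exact hcut _ _ hx' hy' hxy'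
  have hjP : p j ∉ P := by
    rintro ⟨m, hm, hmj⟩
    rw [Set.mem_Iic] at hm
    have := hp.injOn (show m < n by omega) hj hmj
    omega
  rcases htwo (p (j - 1)) with h | h
  · have hjY := ((htwo (p j)).resolve_left fun h' => hj' (h.trans h'.symm)).symm
    exact hjP (key _ _ h.symm hjY (hp.adj_pred (by omega) hj)).2
  · have hjX := ((htwo (p j)).resolve_right fun h' => hj' (h.trans h'.symm)).symm
    exact hjP (key _ _ hjX h.symm (hp.adj_pred (by omega) hj).symm).1

theorem paritySplit_of_minimal_separating (hG : Chordal G) (hp : IsPathOn G p n)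
    (hij : i < j) (hj : j < n) (hsep : ¬(G.deleteEdges (segEdges p i j)).Connected)
    (hL : (G.deleteEdges (segEdges p (i + 1) j)).Connected)
    (hR : (G.deleteEdges (segEdges p i (j - 1))).Connected) :
    ParitySplit (G.deleteEdges (segEdges p 0 (n - 1))) p i j := by
  set H := G.deleteEdges (segEdges p i j)
  have hHL : H = (G.deleteEdges (segEdges p (i + 1) j)).deleteEdges {s(p i, p (i + 1))} := by
    rw [deleteEdges_deleteEdges, ← segEdges_eq_union_left hij]
  have hHR : H = (G.deleteEdges (segEdges p i (j - 1))).deleteEdges {s(p (j - 1), p j)} := by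
    rw [deleteEdges_deleteEdges, ← segEdges_eq_union_right hij]
  have hi : ¬H.Reachable (p i) (p (i + 1)) :=
    hHL ▸ hL.not_reachable_deleteEdges_singleton (hHL ▸ hsep)
  have hj' : ¬H.Reachable (p (j - 1)) (p j) :=
    hHR ▸ hR.not_reachable_deleteEdges_singleton (hHR ▸ hsep)
  have htwo : ∀ v, H.Reachable v (p i) ∨ H.Reachable v (p (i + 1)) :=
    hHL ▸ hL.reachable_or_reachable_deleteEdges_singleton _ _
  have hsplit : ParitySplit H p i j := by
    refine paritySplit_of_not_reachable_succ (fun u v w huv hvw => ?_)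
      (fun t hit htj => hp.not_reachable_succ hG hj htwo hi hj' hit htj)
    rcases htwo u with hu | hu <;> rcases htwo v with hv | hv <;> rcases htwo w with hw | hw
    all_goals first
      | exact hu.trans hw.symm
      | exact absurd (hu.trans hv.symm) huv
      | exact absurd (hv.trans hw.symm) hvw
  have hchord : ∀ k, i ≤ k → k + 2 ≤ j →
      (G.deleteEdges (segEdges p 0 (n - 1))).Adj (p k) (p (k + 2)) := fun k hik hkj =>
    deleteEdges_adj.2 ⟨hp.adj_add_two_of_paritySplit hG hj hj hsplit k hik hkj,
      hp.add_two_not_mem_segEdges (by omega) (by omega)⟩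
  intro k l hik hkj hil hlj
  exact ⟨fun h => (hsplit k l hik hkj hil hlj).1
      (h.mono (deleteEdges_anti (segEdges_mono (Nat.zero_le i) (by omega)))),
    reachable_of_adj_add_two hchord hik hkj hil hlj⟩

/-! ### A maximal parity split comes from a separator path -/

/-- The two other edges cannot both avoid `p`, by the split. An edge of `p` among them is the
edge of `p` next to an end of the segment, and then the third edge of the triangle is a chord that
extends the split beyond that end. -/
theorem IsPathOn.no_triangle (hp : IsPathOn G p n) (hij : i < j) (hj : j < n)
    (hsplit : ParitySplit (G.deleteEdges (segEdges p 0 (n - 1))) p i j)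
    (hmaxL : 0 < i → ¬ParitySplit (G.deleteEdges (segEdges p 0 (n - 1))) p (i - 1) j)
    (hmaxR : j + 1 < n → ¬ParitySplit (G.deleteEdges (segEdges p 0 (n - 1))) p i (j + 1))
    {t : ℕ} (hit : i ≤ t) (htj : t < j) {x : V} (h₁ : G.Adj (p t) x)
    (h₂ : G.Adj x (p (t + 1))) (h₁D : s(p t, x) ∉ segEdges p i j)
    (h₂D : s(x, p (t + 1)) ∉ segEdges p i j) : False := by
  set G₃ := G.deleteEdges (segEdges p 0 (n - 1))
  have hn : n - 1 < n := by omega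
  by_cases hx₁ : s(p t, x) ∈ segEdges p 0 (n - 1)
  · rcases (hp.mem_segEdges_iff hn (by omega)).1 hx₁ with ⟨-, -, rfl⟩ | ⟨ht0, -, rfl⟩
    · exact h₁D ((hp.succ_mem_segEdges_iff hj (by omega)).2 ⟨hit, htj⟩)
    obtain rfl : t = i := by
      by_contra hti
      exact h₁D ((hp.mem_segEdges_iff hj (by omega)).2 (Or.inr ⟨by omega, by omega, rfl⟩))
    have hchord : G₃.Adj (p (t - 1)) (p (t + 1)) := by
      refine deleteEdges_adj.2 ⟨h₂, ?_⟩
      have := hp.add_two_not_mem_segEdges (a := 0) hn (k := t - 1) (by omega)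
      rwa [show t - 1 + 2 = t + 1 by omega] at this
    exact hmaxL ht0 (hsplit.extend_left hij ht0 hchord.reachable)
  by_cases hx₂ : s(x, p (t + 1)) ∈ segEdges p 0 (n - 1)
  · rw [Sym2.eq_swap] at hx₂ h₂D
    rcases (hp.mem_segEdges_iff hn (by omega)).1 hx₂ with ⟨-, ht2, rfl⟩ | ⟨-, -, rfl⟩
    · obtain rfl : t + 1 = j := by
        by_contra htj'
        exact h₂D ((hp.mem_segEdges_iff hj (by omega)).2 (Or.inl ⟨by omega, by omega, rfl⟩))
      have hchord : G₃.Adj (p t) (p (t + 2)) :=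
        deleteEdges_adj.2 ⟨h₁, hp.add_two_not_mem_segEdges hn (by omega)⟩
      exact hmaxR (by omega) (hsplit.extend_right hij (by simpa using hchord.reachable.symm))
    · exact h₁.ne (by simp)
  · have hR : G₃.Reachable (p t) (p (t + 1)) :=
      (deleteEdges_adj.2 ⟨h₁, hx₁⟩).reachable.trans (deleteEdges_adj.2 ⟨h₂, hx₂⟩).reachable
    exact absurd ((hsplit t (t + 1) hit htj.le (by omega) htj).1 hR) (by omega)

theorem IsPathOn.three_le_length (hp : IsPathOn G p n) (hij : i < j) (hj : j < n)
    (hsplit : ParitySplit (G.deleteEdges (segEdges p 0 (n - 1))) p i j)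
    (hmaxL : 0 < i → ¬ParitySplit (G.deleteEdges (segEdges p 0 (n - 1))) p (i - 1) j)
    (hmaxR : j + 1 < n → ¬ParitySplit (G.deleteEdges (segEdges p 0 (n - 1))) p i (j + 1))
    {t : ℕ} (hit : i ≤ t) (htj : t < j) (W : G.Walk (p t) (p (t + 1)))
    (hWD : ∀ e ∈ W.edges, e ∉ segEdges p i j) : 3 ≤ W.length := by
  refine Nat.le_of_not_lt fun hlt => ?_
  interval_cases h : W.length
  · have := hp.injOn (show t < n by omega) (show t + 1 < n by omega)
      (Walk.eq_of_length_eq_zero h)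
    omega
  · exact hWD _ (W.mem_edges_of_length_eq_one h)
      ((hp.succ_mem_segEdges_iff hj (by omega)).2 ⟨hit, htj⟩)
  · obtain ⟨x, h₁, h₂, h₁W, h₂W⟩ := W.exists_of_length_eq_two h
    exact hp.no_triangle hij hj hsplit hmaxL hmaxR hit htj h₁ h₂ (hWD _ h₁W) (hWD _ h₂W)

/-- A shortest walk avoiding the segment between the ends of one of its edges closes up to a
cycle; a chord of that cycle is a shortcut or an edge of the segment, and either gives a shorter
such walk. -/
theorem IsPathOn.not_reachable_of_paritySplit (hp : IsPathOn G p n) (hG : Chordal G)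
    (hij : i < j) (hj : j < n)
    (hsplit : ParitySplit (G.deleteEdges (segEdges p 0 (n - 1))) p i j)
    (hmaxL : 0 < i → ¬ParitySplit (G.deleteEdges (segEdges p 0 (n - 1))) p (i - 1) j)
    (hmaxR : j + 1 < n → ¬ParitySplit (G.deleteEdges (segEdges p 0 (n - 1))) p i (j + 1))
    {t : ℕ} (hit : i ≤ t) (htj : t < j) :
    ¬(G.deleteEdges (segEdges p i j)).Reachable (p t) (p (t + 1)) := by
  classical
  intro hR
  obtain ⟨W, hWD, -⟩ := hR.exists_walk_of_deleteEdges
  suffices key : ∀ N t (W : G.Walk (p t) (p (t + 1))), i ≤ t → t < j → W.IsPath →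
      (∀ e ∈ W.edges, e ∉ segEdges p i j) → W.length = N → False from
    key _ t W.bypass hit htj W.bypass_isPath
      (fun e he => hWD e (W.edges_bypass_subset_edges he)) rfl
  intro N
  induction N using Nat.strong_induction_on with
  | _ N ih =>
  rintro t W hit htj hW hWD rfl
  obtain ⟨u, w, hu, hw, huw, hnot, hne⟩ := hG.exists_chord W hW (hp.adj t (by omega)).symm
    (hp.three_le_length hij hj hsplit hmaxL hmaxR hit htj W hWD)
  by_cases hD : s(u, w) ∈ segEdges p i j
  · obtain ⟨s, hs₁, hs₂, hs⟩ := mem_segEdges.1 hD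
    have hsupp : ∀ v ∈ s(u, w), v ∈ W.support := by
      intro v hv
      rcases Sym2.mem_iff.1 hv with rfl | rfl
      exacts [hu, hw]
    obtain ⟨Z, hZ, hlen⟩ := W.exists_subwalk (hsupp _ (hs ▸ Sym2.mem_mk_left _ _))
      (hsupp _ (hs ▸ Sym2.mem_mk_right _ _))
    have hlt : Z.length < W.length := hlen.resolve_right fun h => hne (hs.symm.trans h)
    exact ih _ (lt_of_le_of_lt Z.length_bypass_le_length hlt) s Z.bypass hs₁ hs₂
      Z.bypass_isPath (fun e he => hWD e (hZ e (Z.edges_bypass_subset_edges he))) rfl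
  · obtain ⟨W', hlt, -, hW'⟩ := W.exists_shorter_of_chord hu hw huw hnot
    exact ih _ (lt_of_le_of_lt W'.length_bypass_le_length hlt) t W'.bypass hit htj
      W'.bypass_isPath (fun e he => (hW' e (W'.edges_bypass_subset_edges he)).elim (hWD e)
        fun h => h ▸ hD) rfl

theorem IsPathOn.connected_deleteEdges_of_chords (hp : IsPathOn G p n) (hconn : G.Connected)
    (hij : i < j) (hj : j < n) (hchord : ∀ k, i ≤ k → k + 2 ≤ j → G.Adj (p k) (p (k + 2)))
    (hia : i ≤ a) (hab : a ≤ b) (hbj : b ≤ j) (hne : (a, b) ≠ (i, j)) :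
    (G.deleteEdges (segEdges p a b)).Connected := by
  set K := G.deleteEdges (segEdges p a b)
  have hK : ∀ k, i ≤ k → k + 2 ≤ j → K.Adj (p k) (p (k + 2)) := fun k h₁ h₂ =>
    deleteEdges_adj.2 ⟨hchord k h₁ h₂, hp.add_two_not_mem_segEdges (by omega) (by omega)⟩
  obtain ⟨r, hir, hrj, hr⟩ : ∃ r, i ≤ r ∧ r < j ∧ K.Adj (p r) (p (r + 1)) := by
    by_cases hai : i < a
    · refine ⟨i, le_rfl, hij, deleteEdges_adj.2 ⟨hp.adj i (by omega), fun h => ?_⟩⟩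
      have := (hp.succ_mem_segEdges_iff (by omega) (by omega)).1 h
      omega
    · have hbj' : b < j := by
        by_contra h
        exact hne (Prod.ext (by omega) (by omega))
      refine ⟨j - 1, by omega, by omega,
        deleteEdges_adj.2 ⟨hp.adj (j - 1) (by omega), fun h => ?_⟩⟩
      have := (hp.succ_mem_segEdges_iff (by omega) (by omega)).1 h
      omega
  have hto : ∀ k, i ≤ k → k ≤ j → K.Reachable (p k) (p r) := by
    intro k hik hkj
    by_cases hkr : k % 2 = r % 2
    · exact reachable_of_adj_add_two hK hik hkj hir hrj.le hkr
    · exact (reachable_of_adj_add_two hK hik hkj (by omega) hrj (by omega)).trans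
        hr.reachable.symm
  refine (connected_iff _).2
    ⟨fun u v => (hconn.preconnected u v).of_forall_adj fun x y hxy => ?_, hconn.nonempty⟩
  by_cases he : s(x, y) ∈ segEdges p a b
  · obtain ⟨s, hs₁, hs₂, hs⟩ := mem_segEdges.1 he
    rcases Sym2.eq_iff.1 hs with ⟨rfl, rfl⟩ | ⟨rfl, rfl⟩
    · exact (hto s (by omega) (by omega)).trans (hto (s + 1) (by omega) (by omega)).symm
    · exact (hto (s + 1) (by omega) (by omega)).trans (hto s (by omega) (by omega)).symm
  · exact (deleteEdges_adj.2 ⟨hxy, he⟩).reachable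

theorem separating_of_paritySplit_maximal (hG : Chordal G) (hconn : G.Connected)
    (hp : IsPathOn G p n) (hij : i < j) (hj : j < n)
    (hsplit : ParitySplit (G.deleteEdges (segEdges p 0 (n - 1))) p i j)
    (hmaxL : 0 < i → ¬ParitySplit (G.deleteEdges (segEdges p 0 (n - 1))) p (i - 1) j)
    (hmaxR : j + 1 < n → ¬ParitySplit (G.deleteEdges (segEdges p 0 (n - 1))) p i (j + 1)) :
    ¬(G.deleteEdges (segEdges p i j)).Connected ∧
      ∀ a b, i ≤ a → a ≤ b → b ≤ j → (a, b) ≠ (i, j) →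
        (G.deleteEdges (segEdges p a b)).Connected :=
  ⟨fun h => hp.not_reachable_of_paritySplit hG hij hj hsplit hmaxL hmaxR le_rfl hij
      (h.preconnected _ _),
    fun _ _ hia hab hbj hne => hp.connected_deleteEdges_of_chords hconn hij hj
      (hp.adj_add_two_of_paritySplit hG (by omega) hj hsplit) hia hab hbj hne⟩

/-! ### Paths as lists -/

theorem length_subseq (L : List V) (hb : b < L.length) :
    (subseq L a b).length = b + 1 - a := by
  simp [subseq]
  omega

theorem getD_subseq (L : List V) (d : V) {k : ℕ} (h : a + k ≤ b) :
    (subseq L a b).getD k d = L.getD (a + k) d := by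
  simp only [subseq, List.getD_eq_getElem?_getD, List.getElem?_drop, List.getElem?_take,
    if_pos (show a + k < b + 1 by omega)]

theorem subseq_subseq (L : List V) {a' b' : ℕ} (hij : i ≤ j) (h : b' ≤ j - i) :
    subseq (subseq L i j) a' b' = subseq L (i + a') (i + b') := by
  simp only [subseq, List.take_drop, List.take_take, List.drop_drop]
  congr 2
  omega

theorem edgesOf_eq_segEdges (L : List V) (d : V) :
    edgesOf L = segEdges (L.getD · d) 0 (L.length - 1) := by
  ext e
  simp only [edgesOf, mem_segEdges, List.get_eq_getElem, List.getD_eq_getElem?_getD]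
  constructor
  · rintro ⟨s, hs, rfl⟩
    exact ⟨s, Nat.zero_le s, by omega, by simp [List.getElem?_eq_getElem hs,
      List.getElem?_eq_getElem (show s < L.length by omega)]⟩
  · rintro ⟨s, -, hs, rfl⟩
    exact ⟨s, by omega, by simp [List.getElem?_eq_getElem (show s + 1 < L.length by omega),
      List.getElem?_eq_getElem (show s < L.length by omega)]⟩

theorem edgesOf_subseq (L : List V) (d : V) (hb : b < L.length) :
    edgesOf (subseq L a b) = segEdges (L.getD · d) a b := by
  rw [edgesOf_eq_segEdges _ d, length_subseq L hb]
  ext e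
  simp only [mem_segEdges]
  constructor
  · rintro ⟨s, -, hs, rfl⟩
    refine ⟨a + s, by omega, by omega, ?_⟩
    rw [getD_subseq L d (by omega), getD_subseq L d (by omega)]
    rfl
  · rintro ⟨s, h₁, h₂, rfl⟩
    refine ⟨s - a, Nat.zero_le _, by omega, ?_⟩
    rw [getD_subseq L d (by omega), getD_subseq L d (by omega), Nat.add_sub_cancel' h₁,
      ← Nat.add_assoc, Nat.add_sub_cancel' h₁]

theorem IsSimpleSeq.isPathOn {L : List V} (hL : IsSimpleSeq G L) (d : V) :
    IsPathOn G (L.getD · d) L.length where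
  adj k hk := by
    simpa [List.getD_eq_getElem?_getD, List.getElem?_eq_getElem hk,
      List.getElem?_eq_getElem (show k < L.length by omega)]
      using List.isChain_iff_getElem.1 hL.1.2 k hk
  injOn k hk l hl h := by
    simp only [List.getD_eq_getElem?_getD, List.getElem?_eq_getElem (Set.mem_Iio.1 hk),
      List.getElem?_eq_getElem (Set.mem_Iio.1 hl), Option.getD_some] at h
    exact hL.2.getElem_inj_iff.1 h

theorem oddEvenSplit_iff (L : List V) (d : V) (hj : j < L.length) :
    OddEvenSplit G L i j hj ↔ ParitySplit (G.deleteEdges (edgesOf L)) (L.getD · d) i j := by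
  have hget : ∀ k (hk : k < L.length), L.get ⟨k, hk⟩ = L.getD k d := fun k hk => by
    simp [List.getD_eq_getElem?_getD, List.getElem?_eq_getElem hk]
  simp only [OddEvenSplit, ParitySplit, hget]
  refine ⟨fun h k l hik hkj hil hlj => ⟨fun hr => ?_, h.1 k l hik hkj hil hlj⟩,
    fun h => ⟨fun k l hik hkj hil hlj => (h k l hik hkj hil hlj).2,
      fun k l hik hkj hil hlj hkl hr => hkl ((h k l hik hkj hil hlj).1 hr)⟩⟩
  by_contra hkl
  exact h.2 k l hik hkj hil hlj hkl hr

theorem separatorPath_subseq_iff {L : List V} (hL : IsSimpleSeq G L) (d : V) (hij : i ≤ j)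
    (hj : j < L.length) :
    SeparatorPath G (subseq L i j) ↔ ¬(G.deleteEdges (segEdges (L.getD · d) i j)).Connected ∧
      ∀ a b, i ≤ a → a ≤ b → b ≤ j → (a, b) ≠ (i, j) →
        (G.deleteEdges (segEdges (L.getD · d) a b)).Connected := by
  have hsep : ∀ a b, b ≤ j → (SeparatingPath G (subseq L a b) ↔
      ¬(G.deleteEdges (segEdges (L.getD · d) a b)).Connected) := fun a b hb => by
    rw [SeparatingPath, Separating, edgesOf_subseq L d (by omega)]
  have hne : ∀ a b, i ≤ a → a ≤ b → b ≤ j → (a, b) ≠ (i, j) → subseq L a b ≠ subseq L i j :=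
    fun a b hia hab hbj hne h => hne (by
      have := congrArg List.length h
      rw [length_subseq L (by omega), length_subseq L hj] at this
      exact Prod.ext (by omega) (by omega))
  have hsimple : IsSimpleSeq G (subseq L i j) :=
    ⟨⟨List.ne_nil_of_length_pos (by rw [length_subseq L hj]; omega),
      (hL.1.2.take (j + 1)).drop i⟩,
      hL.2.sublist ((List.drop_sublist _ _).trans (List.take_sublist _ _))⟩
  rw [SeparatorPath, hsep i j le_rfl]
  constructor
  · rintro ⟨-, hs, hmin⟩
    refine ⟨hs, fun a b hia hab hbj hab' => not_not.1 ((hsep a b hbj).not.1 ?_)⟩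
    refine hmin _ ⟨a - i, b - i, by omega, by rw [length_subseq L hj]; omega, ?_⟩
      (hne a b hia hab hbj hab')
    rw [subseq_subseq L hij (by omega), Nat.add_sub_cancel' hia, Nat.add_sub_cancel' (by omega)]
  · rintro ⟨hs, hmin⟩
    refine ⟨hsimple, hs, ?_⟩
    rintro q ⟨a, b, hab, hb, rfl⟩ hq
    rw [length_subseq L hj] at hb
    rw [subseq_subseq L hij (by omega)] at hq ⊢
    rw [hsep _ _ (by omega), not_not]
    exact hmin _ _ (by omega) (by omega) (by omega)
      fun h => hq (by simp only [Prod.mk.injEq] at h; rw [h.1, h.2])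

theorem separatorPath_iff_oddEvenSplit_maximal_general
    {V : Type*} (G : SimpleGraph V)
    (hconn : G.Connected) (hchordal : Chordal G)
    (P0 : List V) (hP0 : IsSimpleSeq G P0)
    (i j : ℕ) (hij : i < j) (hj : j < P0.length) :
    (SeparatorPath G (subseq P0 i j) → OddEvenSplit G P0 i j hj) ∧
    ((OddEvenSplit G P0 i j hj ∧
      ∀ (x y : ℕ), x ≤ i → j ≤ y → (hy : y < P0.length) → (x, y) ≠ (i, j) →
        ¬ OddEvenSplit G P0 x y hy) →
      SeparatorPath G (subseq P0 i j)) := by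
  -- `P0.getD · d` reads `P0` as a vertex sequence; the default `d` is never reached
  set d := P0.get ⟨i, by omega⟩
  have hp := hP0.isPathOn d
  have hsplit : ∀ x y (hy : y < P0.length), OddEvenSplit G P0 x y hy ↔
      ParitySplit (G.deleteEdges (segEdges (P0.getD · d) 0 (P0.length - 1))) (P0.getD · d) x y :=
    fun x y hy => by rw [oddEvenSplit_iff P0 d hy, edgesOf_eq_segEdges P0 d]
  rw [separatorPath_subseq_iff hP0 d hij.le hj, hsplit]
  refine ⟨fun ⟨hsep, hmin⟩ => ?_, fun ⟨hs, hmax⟩ => ?_⟩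
  · exact paritySplit_of_minimal_separating hchordal hp hij hj hsep
      (hmin _ _ (by omega) hij le_rfl (by simp))
      (hmin _ _ le_rfl (by omega) (by omega) (by simp; omega))
  · exact separating_of_paritySplit_maximal hchordal hconn hp hij hj hs
      (fun hi h => hmax (i - 1) j (by omega) le_rfl hj (by simp; omega) ((hsplit _ _ _).2 h))
      (fun hj' h => hmax i (j + 1) le_rfl (by omega) hj' (by simp) ((hsplit _ _ _).2 h))

/-- If `(P₀)_{i,j}` is a separator path then the odd/even split condition
holds; conversely, if the condition holds for `(i,j)` and for no contiguous
subpath properly containing `(P₀)_{i,j}`, then `(P₀)_{i,j}` is a separator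
path. -/
theorem separatorPath_iff_oddEvenSplit_maximal
    {V : Type*} [Fintype V] (G : SimpleGraph V)
    (hconn : G.Connected) (hchordal : Chordal G)
    (hnb : ∀ e : Sym2 V, ¬ G.IsBridge e)
    (P0 : List V) (hP0 : IsSimpleSeq G P0)
    (i j : ℕ) (hij : i < j) (hj : j < P0.length) :
    (SeparatorPath G (subseq P0 i j) → OddEvenSplit G P0 i j hj) ∧
    ((OddEvenSplit G P0 i j hj ∧
      ∀ (x y : ℕ), x ≤ i → j ≤ y → (hy : y < P0.length) → (x, y) ≠ (i, j) →
        ¬ OddEvenSplit G P0 x y hy) →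
      SeparatorPath G (subseq P0 i j)) :=
  separatorPath_iff_oddEvenSplit_maximal_general G hconn hchordal P0 hP0 i j hij hj

end NSP
end

section
/- Let p be a simple path and let 0 ≤ i < j < |p| be indices with j − i > 1 such that p_i and p_j are adjacent in G. Let p′ be the path obtained from p by replacing the contiguous subpath p_{i,j} with the single edge between p_i and p_j. Then for all vertices u and v, if u and v are weakly p-connected, then u and v are weakly p′-connected. -/
open SimpleGraph

namespace NSP

variable {V : Type*}

/-! The edges of `p' = p_{0,i} → p_{j,…}` are those of `p` together with the chord `p_i p_j`.
As `p` is simple and `j - i > 1`, no edge `p_k p_{k+1}` with `i ≤ k < j` lies on `p'`, so the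
detour `p_{i,j}` joins the ends of the chord in `G` minus the edges of `p'`. Hence every edge of
`G` avoiding `p` either avoids `p'` or is bypassed by that detour. -/

theorem edgesOf_singleton (a : V) : edgesOf [a] = ∅ := by
  ext; simp [edgesOf]

theorem edgesOf_cons_cons (a b : V) (l : List V) :
    edgesOf (a :: b :: l) = insert s(a, b) (edgesOf (b :: l)) := by
  ext e
  constructor
  · rintro ⟨_ | k, hk, rfl⟩
    · exact Set.mem_insert _ _
    · exact Set.mem_insert_of_mem _ ⟨k, by simpa using hk, rfl⟩
  · rintro (rfl | ⟨k, hk, rfl⟩)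
    · exact ⟨0, by simp, rfl⟩
    · exact ⟨k + 1, by simpa using hk, rfl⟩

theorem edgesOf_append {l₁ l₂ : List V} (h₁ : l₁ ≠ []) (h₂ : l₂ ≠ []) :
    edgesOf (l₁ ++ l₂) =
      insert s(l₁.getLast h₁, l₂.head h₂) (edgesOf l₁ ∪ edgesOf l₂) := by
  induction l₁ with
  | nil => exact absurd rfl h₁
  | cons a t ih =>
    cases t with
    | nil =>
      obtain ⟨b, l, rfl⟩ := List.exists_cons_of_ne_nil h₂
      simp [edgesOf_cons_cons, edgesOf_singleton]
    | cons a' t =>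
      simp only [List.cons_append, edgesOf_cons_cons, List.getLast_cons_cons]
      rw [← List.cons_append, ih (List.cons_ne_nil _ _), Set.insert_comm, Set.insert_union]

theorem edgesOf_subset_of_isInfix {l₁ l₂ : List V} (h : l₁ <:+: l₂) :
    edgesOf l₁ ⊆ edgesOf l₂ := by
  obtain ⟨s, t, rfl⟩ := h
  have hget : ∀ m (hm : m < l₁.length),
      (s ++ l₁ ++ t)[s.length + m]'(by simp; omega) = l₁[m] := by
    intro m hm
    rw [List.getElem_append_left (by simp; omega), List.getElem_append_right (by omega)]
    simp
  rintro _ ⟨k, hk, rfl⟩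
  exact ⟨s.length + k, by simp; omega, by
    simp only [List.get_eq_getElem, Nat.add_assoc]
    rw [hget k (by omega), hget (k + 1) hk]⟩

theorem mem_of_mem_edgesOf {l : List V} {e : Sym2 V} (he : e ∈ edgesOf l) {x : V}
    (hx : x ∈ e) : x ∈ l := by
  obtain ⟨k, hk, rfl⟩ := he
  rcases Sym2.mem_iff.1 hx with rfl | rfl <;> exact List.getElem_mem _

theorem edgesOf_inter_eq_empty_iff {q : List V} {D : Set (Sym2 V)} :
    edgesOf q ∩ D = ∅ ↔ ∀ (k : ℕ) (hk : k + 1 < q.length), s(q[k], q[k + 1]) ∉ D := by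
  simp only [Set.eq_empty_iff_forall_notMem, Set.mem_inter_iff, edgesOf]
  constructor
  · exact fun h k hk hD => h _ ⟨⟨k, hk, rfl⟩, hD⟩
  · rintro h _ ⟨⟨k, hk, rfl⟩, hD⟩
    exact h k hk hD

theorem isChain_deleteEdges_adj_iff {G : SimpleGraph V} {D : Set (Sym2 V)} {q : List V} :
    q.IsChain (G.deleteEdges D).Adj ↔ q.IsChain G.Adj ∧ edgesOf q ∩ D = ∅ := by
  simp only [List.isChain_iff_getElem, deleteEdges_adj, edgesOf_inter_eq_empty_iff]
  exact ⟨fun h => ⟨fun k hk => (h k hk).1, fun k hk => (h k hk).2⟩,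
    fun h k hk => ⟨h.1 k hk, h.2 k hk⟩⟩

theorem weaklyConn_iff_reachable {G : SimpleGraph V} {p : List V} {u v : V} :
    WeaklyConn G p u v ↔ (G.deleteEdges (edgesOf p)).Reachable u v := by
  rw [reachable_iff_reflTransGen]
  constructor
  · rintro ⟨q, ⟨hne, hchain⟩, hu, hv, hdisj⟩
    rw [List.head?_eq_some_head hne, Option.some_inj] at hu
    rw [List.getLast?_eq_some_getLast hne, Option.some_inj] at hv
    subst hu hv
    exact List.relationReflTransGen_of_exists_isChain q
      (isChain_deleteEdges_adj_iff.2 ⟨hchain, hdisj⟩) hne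
  · intro h
    obtain ⟨q, hne, hchain, rfl, rfl⟩ := List.exists_isChain_ne_nil_of_relationReflTransGen h
    obtain ⟨hchain, hdisj⟩ := isChain_deleteEdges_adj_iff.1 hchain
    exact ⟨q, ⟨hne, hchain⟩, List.head?_eq_some_head hne, List.getLast?_eq_some_getLast hne,
      hdisj⟩

theorem reachable_deleteEdges_of_subset_insert {G : SimpleGraph V} {D D' : Set (Sym2 V)}
    {x y u v : V} (hD' : D' ⊆ insert s(x, y) D) (hxy : (G.deleteEdges D').Reachable x y)
    (huv : (G.deleteEdges D).Reachable u v) : (G.deleteEdges D').Reachable u v := by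
  have hstep : ∀ a b, (G.deleteEdges D).Adj a b → (G.deleteEdges D').Reachable a b := by
    intro a b hab
    rw [deleteEdges_adj] at hab
    by_cases hab' : s(a, b) ∈ D'
    · rcases Sym2.eq_iff.1 ((hD' hab').resolve_right hab.2) with ⟨rfl, rfl⟩ | ⟨rfl, rfl⟩
      exacts [hxy, hxy.symm]
    · exact (deleteEdges_adj.2 ⟨hab.1, hab'⟩).reachable
  rw [reachable_iff_reflTransGen] at huv ⊢
  exact Relation.reflTransGen_closed
    (fun a b hab => (reachable_iff_reflTransGen a b).1 (hstep a b hab)) _ _ huv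

section ReplaceByEdge

variable {p : List V} {i j : ℕ}

theorem edgesOf_take_append_drop (hi : i < p.length) (hj : j < p.length) :
    edgesOf (p.take (i + 1) ++ p.drop j) =
      insert s(p[i], p[j]) (edgesOf (p.take (i + 1)) ∪ edgesOf (p.drop j)) := by
  rw [edgesOf_append (List.ne_nil_of_length_pos (by simp; omega))
    (List.ne_nil_of_length_pos (by simp; omega))]
  simp only [List.getLast_take, Nat.add_sub_cancel, Option.getD_some, List.head_drop,
    List.getElem?_eq_getElem hi]

theorem edgesOf_take_append_drop_subset (hi : i < p.length) (hj : j < p.length) :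
    edgesOf (p.take (i + 1) ++ p.drop j) ⊆ insert s(p[i], p[j]) (edgesOf p) := by
  rw [edgesOf_take_append_drop hi hj]
  exact Set.insert_subset_insert (Set.union_subset
    (edgesOf_subset_of_isInfix (List.take_prefix _ _).isInfix)
    (edgesOf_subset_of_isInfix (List.drop_suffix _ _).isInfix))

theorem edge_notMem_edgesOf_take_append_drop (hp : p.Nodup) (hgap : i + 1 < j)
    (hj : j < p.length) {k : ℕ} (hik : i ≤ k) (hkj : k < j) :
    s(p[k], p[k + 1]) ∉ edgesOf (p.take (i + 1) ++ p.drop j) := by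
  rw [edgesOf_take_append_drop (by omega) hj, Set.mem_insert_iff, Set.mem_union]
  rintro (hchord | hleft | hright)
  · rcases Sym2.eq_iff.1 hchord with ⟨h₁, h₂⟩ | ⟨h₁, h₂⟩ <;>
      rw [hp.getElem_inj_iff] at h₁ h₂ <;> omega
  · obtain ⟨m, hm, h⟩ := List.mem_take_iff_getElem.1
      (mem_of_mem_edgesOf hleft (Sym2.mem_mk_right _ _))
    have := hp.getElem_inj_iff.1 h
    omega
  · obtain ⟨m, hm, h⟩ := List.mem_drop_iff_getElem.1
      (mem_of_mem_edgesOf hright (Sym2.mem_mk_left _ _))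
    have := hp.getElem_inj_iff.1 h
    omega

theorem reachable_deleteEdges_take_append_drop {G : SimpleGraph V} (hp : IsSimpleSeq G p)
    (hgap : i + 1 < j) (hj : j < p.length) :
    (G.deleteEdges (edgesOf (p.take (i + 1) ++ p.drop j))).Reachable p[i] p[j] := by
  suffices h : ∀ k, i ≤ k → ∀ hk : k ≤ j,
      (G.deleteEdges (edgesOf (p.take (i + 1) ++ p.drop j))).Reachable p[i] p[k] from
    h j (by omega) le_rfl
  intro k hik
  induction k, hik using Nat.le_induction with
  | base => exact fun _ => Reachable.refl _
  | succ k hik ih =>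
    intro hk
    have hadj : G.Adj p[k] p[k + 1] := List.isChain_iff_getElem.1 hp.1.2 k (by omega)
    exact (ih (by omega)).trans (deleteEdges_adj.2
      ⟨hadj, edge_notMem_edgesOf_take_append_drop hp.2 hgap hj hik (by omega)⟩).reachable

end ReplaceByEdge

/-- Replacing a contiguous subpath `p_{i,j}` (with `j - i > 1` and `p_i`
adjacent to `p_j`) by the single edge between `p_i` and `p_j` preserves
weak connectivity. -/
theorem weaklyConn_of_replace_by_edge
    {V : Type*} (G : SimpleGraph V)
    (p : List V) (hp : IsSimpleSeq G p)
    (i j : ℕ) (hj : j < p.length) (hgap : 1 < j - i) :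
    ∀ u v : V, WeaklyConn G p u v →
      WeaklyConn G (p.take (i + 1) ++ p.drop j) u v := by
  intro u v
  simp only [weaklyConn_iff_reachable]
  exact reachable_deleteEdges_of_subset_insert (edgesOf_take_append_drop_subset (by omega) hj)
    (reachable_deleteEdges_take_append_drop hp (by omega) hj)

end NSP
end
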